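/- Let x, y ∈ ℝⁿ with x = −y. Then for every z ∈ Co^∞(x,y) with z ≠ x and z ≠ y, one has d_⊞(x,y) = d_⊞(x,z) = d_⊞(z,y). -/

import Mathlib

/-! Since `⊞` commutes with multiplication by any real scalar, for `y = -x` every point of
`Co^∞(x, -x)` is `c • x` with `c = ⊞(t, r, -s, -w)`, and `|c| ≤ 1` because the `n`-ary `⊞`
returns one of its arguments or `0`. A point other than `x` and `-x` has `|c| < 1`; as `⊞`
keeps the argument of larger modulus, coordinatewise `x_i ⊟ (-x_i)`, `x_i ⊟ c x_i` and
`c x_i ⊟ (-x_i)` all equal `x_i`, so the three distances are all `max_i |x_i|`. -/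
open Filter Finset

/-- The binary idempotent operation `⊞`. -/
noncomputable def bop (a b : ℝ) : ℝ :=
  if |b| < |a| then a else if |a| < |b| then b else (a + b) / 2

/-- The unique real `(2p+1)`-th root of `t`. -/
noncomputable def oddRoot (p : ℕ) (t : ℝ) : ℝ :=
  Real.sign t * |t| ^ ((1 : ℝ) / (2 * (p : ℝ) + 1))

/-- `ξ_I[u](α) = Card{i ∈ I : u i = α} − Card{i ∈ I : u i = −α}`. -/
noncomputable def xiMap {ι : Type*} (I : Finset ι) (u : ι → ℝ) (α : ℝ) : ℤ :=
  ((I.filter fun i => u i = α).card : ℤ) - ((I.filter fun i => u i = -α).card : ℤ)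

/-- The residual index set `J_I(u)`. -/
noncomputable def resid {ι : Type*} (I : Finset ι) (u : ι → ℝ) : Finset ι :=
  I.filter fun i => xiMap I u (u i) ≠ 0

/-- The `n`-ary extension `⊞_{i ∈ I} u i` of the binary operation `⊞`. -/
noncomputable def Fop {ι : Type*} (I : Finset ι) (u : ι → ℝ) : ℝ :=
  if h : (resid I u).Nonempty then
    if 0 < xiMap I u ((resid I u).sup' h fun i => |u i|) then (resid I u).sup' h u
    else if xiMap I u ((resid I u).sup' h fun i => |u i|) < 0 then (resid I u).inf' h u
    else 0
  else 0

/-- The Chebyshev norm `max_{i ∈ [n]} |x i|`. -/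
noncomputable def chebNorm {n : ℕ} (x : Fin n → ℝ) : ℝ := ⨆ i, |x i|

/-- The ultrametric distance `d_⊞(x,y) = max_i |x_i ⊟ y_i|`. -/
noncomputable def dB {n : ℕ} (x y : Fin n → ℝ) : ℝ := ⨆ i, |bop (x i) (-(y i))|

/-- The idempotent symmetric convex hull `Co^∞(x,y)` of two points. -/
noncomputable def coInf {n : ℕ} (x y : Fin n → ℝ) : Set (Fin n → ℝ) :=
  { z | ∃ t r s w : ℝ, 0 ≤ t ∧ 0 ≤ r ∧ 0 ≤ s ∧ 0 ≤ w ∧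
      max (max t r) (max s w) = 1 ∧
      z = fun i => Fop (Finset.univ : Finset (Fin 4)) ![t * x i, r * x i, s * y i, w * y i] }

namespace Finset

variable {ι : Type*}

theorem sup'_neg_eq_neg_inf' (s : Finset ι) (hs : s.Nonempty) (f : ι → ℝ) :
    s.sup' hs (fun i => -f i) = -s.inf' hs f :=
  eq_of_forall_ge_iff fun c => by simp only [sup'_le_iff, neg_le, le_inf'_iff]

theorem inf'_neg_eq_neg_sup' (s : Finset ι) (hs : s.Nonempty) (f : ι → ℝ) :
    s.inf' hs (fun i => -f i) = -s.sup' hs f :=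
  eq_of_forall_le_iff fun c => by simp only [le_inf'_iff, le_neg, sup'_le_iff]

theorem mul₀_inf' {a : ℝ} (ha : 0 ≤ a) (f : ι → ℝ) (s : Finset ι) (hs : s.Nonempty) :
    a * s.inf' hs f = s.inf' hs fun i => a * f i :=
  apply_inf'_eq_inf'_comp hs (a * ·) fun _ _ => mul_min_of_nonneg _ _ ha

end Finset

section Fop

variable {ι : Type*} (I : Finset ι) (u : ι → ℝ)

theorem xiMap_const_mul {a : ℝ} (ha : a ≠ 0) (α : ℝ) :
    xiMap I (fun i => a * u i) (a * α) = xiMap I u α := by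
  simp only [xiMap, ← mul_neg, mul_right_inj' ha]

theorem xiMap_neg_apply (α : ℝ) : xiMap I u (-α) = -xiMap I u α := by
  simp only [xiMap, neg_neg, neg_sub]

theorem xiMap_neg (α : ℝ) : xiMap I (fun i => -u i) α = -xiMap I u α := by
  simp only [xiMap, neg_eq_iff_eq_neg, neg_neg, neg_sub]

theorem resid_const_mul {a : ℝ} (ha : a ≠ 0) : resid I (fun i => a * u i) = resid I u :=
  filter_congr fun i _ => by rw [xiMap_const_mul I u ha]

theorem resid_neg : resid I (fun i => -u i) = resid I u :=
  filter_congr fun i _ => by rw [xiMap_neg, xiMap_neg_apply, neg_neg]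

theorem Fop_neg : Fop I (fun i => -u i) = -Fop I u := by
  unfold Fop
  simp only [resid_neg, abs_neg, xiMap_neg, sup'_neg_eq_neg_inf', inf'_neg_eq_neg_sup']
  split_ifs <;> first | omega | simp

theorem Fop_const_mul_of_pos {a : ℝ} (ha : 0 < a) : Fop I (fun i => a * u i) = a * Fop I u := by
  unfold Fop
  simp only [resid_const_mul I u ha.ne', abs_mul, abs_of_pos ha,
    ← mul₀_sup' ha.le, ← mul₀_inf' ha.le, xiMap_const_mul I u ha.ne']
  split_ifs <;> simp

theorem Fop_zero : Fop I (fun _ => (0 : ℝ)) = 0 := by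
  simp [Fop, resid, xiMap]

theorem Fop_const_mul (a : ℝ) : Fop I (fun i => a * u i) = a * Fop I u := by
  rcases lt_trichotomy a 0 with ha | rfl | ha
  · calc Fop I (fun i => a * u i) = Fop I (fun i => -(-a * u i)) := by simp only [neg_mul, neg_neg]
      _ = a * Fop I u := by rw [Fop_neg, Fop_const_mul_of_pos I u (neg_pos.2 ha)]; ring
  · simp only [zero_mul, Fop_zero]
  · exact Fop_const_mul_of_pos I u ha

theorem Fop_eq_zero_or_exists_eq : Fop I u = 0 ∨ ∃ i ∈ I, Fop I u = u i := by
  unfold Fop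
  split_ifs with hne
  · obtain ⟨i, hi, h⟩ := exists_mem_eq_sup' hne u
    exact .inr ⟨i, mem_of_mem_filter i hi, h⟩
  · obtain ⟨i, hi, h⟩ := exists_mem_eq_inf' hne u
    exact .inr ⟨i, mem_of_mem_filter i hi, h⟩
  all_goals exact .inl rfl

theorem abs_Fop_le {C : ℝ} (hC : 0 ≤ C) (hu : ∀ i ∈ I, |u i| ≤ C) : |Fop I u| ≤ C := by
  rcases Fop_eq_zero_or_exists_eq I u with h | ⟨i, hi, h⟩
  · rwa [h, abs_zero]
  · exact h ▸ hu i hi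

end Fop

theorem bop_self (a : ℝ) : bop a a = a := by
  simp [bop, add_self_div_two]

theorem bop_eq_left {a b : ℝ} (h : |b| < |a|) : bop a b = a := if_pos h

theorem bop_eq_right {a b : ℝ} (h : |a| < |b|) : bop a b = b := by
  rw [bop, if_neg h.not_gt, if_pos h]

theorem abs_mul_self_lt {c : ℝ} (hc : |c| < 1) {a : ℝ} (ha : a ≠ 0) : |c * a| < |a| := by
  rw [abs_mul]
  exact mul_lt_of_lt_one_left (abs_pos.2 ha) hc

theorem bop_mul_self_right {c : ℝ} (hc : |c| < 1) (a : ℝ) : bop a (c * a) = a := by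
  rcases eq_or_ne a 0 with rfl | ha
  · rw [mul_zero, bop_self]
  · exact bop_eq_left (abs_mul_self_lt hc ha)

theorem bop_mul_self_left {c : ℝ} (hc : |c| < 1) (a : ℝ) : bop (c * a) a = a := by
  rcases eq_or_ne a 0 with rfl | ha
  · rw [mul_zero, bop_self]
  · exact bop_eq_right (abs_mul_self_lt hc ha)

section dB

variable {n : ℕ} (x : Fin n → ℝ) {c : ℝ}

theorem dB_neg_right : dB x (-x) = chebNorm x := by
  simp only [dB, chebNorm, Pi.neg_apply, neg_neg, bop_self]

theorem dB_smul_right (hc : |c| < 1) : dB x (c • x) = chebNorm x := by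
  simp only [dB, chebNorm, Pi.smul_apply, smul_eq_mul, ← neg_mul,
    bop_mul_self_right ((abs_neg c).symm ▸ hc)]

theorem dB_smul_neg (hc : |c| < 1) : dB (c • x) (-x) = chebNorm x := by
  simp only [dB, chebNorm, Pi.smul_apply, smul_eq_mul, Pi.neg_apply, neg_neg,
    bop_mul_self_left hc]

end dB

theorem exists_eq_smul_of_mem_coInf_neg {n : ℕ} {x z : Fin n → ℝ} (hz : z ∈ coInf x (-x)) :
    ∃ c : ℝ, |c| ≤ 1 ∧ z = c • x := by
  obtain ⟨t, r, s, w, ht, hr, hs, hw, hmax, rfl⟩ := hz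
  have hle : max (max t r) (max s w) ≤ 1 := hmax.le
  simp only [max_le_iff] at hle
  refine ⟨Fop univ ![t, r, -s, -w], abs_Fop_le _ _ zero_le_one ?_, ?_⟩
  · intro j _
    fin_cases j <;> simp [abs_of_nonneg, *]
  · ext i
    rw [Pi.smul_apply, smul_eq_mul, mul_comm (Fop _ _), ← Fop_const_mul]
    congr 1
    ext j
    fin_cases j <;> simp [mul_comm]

/-- if `x = −y`, all interior points of `Co^∞(x,y)` are equidistant
from `x` and `y`. -/
theorem stmt11 (n : ℕ) (x y : Fin n → ℝ) (hxy : x = -y)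
    (z : Fin n → ℝ) (hz : z ∈ coInf x y) (hzx : z ≠ x) (hzy : z ≠ y) :
    dB x y = dB x z ∧ dB x z = dB z y := by
  obtain rfl : y = -x := by rw [hxy, neg_neg]
  obtain ⟨c, hc_le, rfl⟩ := exists_eq_smul_of_mem_coInf_neg hz
  have hc : |c| < 1 := by
    refine hc_le.lt_of_ne fun h => ?_
    rcases abs_eq zero_le_one |>.1 h with rfl | rfl
    · exact hzx (one_smul ℝ x)
    · exact hzy (neg_one_smul ℝ x)
  rw [dB_neg_right, dB_smul_right x hc, dB_smul_neg x hc]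
  exact ⟨rfl, rfl⟩
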